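/- There exists a unimodular 6×6 integer matrix B with B^t · ((2) ⊕ A_1^2 ⊕ A_1(2)^3) · B = (2) ⊕ A_1(2) ⊕ D_4(2); explicitly one may take B with rows (3,2,1,0,1,1), (-1,0,-1,1,-1,-1), (-1,0,0,-1,0,0), (-1,-1,0,0,0,-1), (-1,-1,0,0,-1,0), (-1,-1,-1,0,0,0). Hence these two hyperbolic lattices are isomorphic. -/

import Mathlib

set_option maxRecDepth 10000
set_option maxHeartbeats 1000000

open Matrix

/-- The explicit base change matrix `B` from the paper. -/
def B14 : Matrix (Fin 6) (Fin 6) ℤ :=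
  !![3, 2, 1, 0, 1, 1;
     -1, 0, -1, 1, -1, -1;
     -1, 0, 0, -1, 0, 0;
     -1, -1, 0, 0, 0, -1;
     -1, -1, 0, 0, -1, 0;
     -1, -1, -1, 0, 0, 0]

/-- The Gram matrix of `(2) ⊕ A₁² ⊕ A₁(2)³`, i.e. `diag(2,-2,-2,-4,-4,-4)`. -/
def G14a : Matrix (Fin 6) (Fin 6) ℤ :=
  !![2, 0, 0, 0, 0, 0;
     0, -2, 0, 0, 0, 0;
     0, 0, -2, 0, 0, 0;
     0, 0, 0, -4, 0, 0;
     0, 0, 0, 0, -4, 0;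
     0, 0, 0, 0, 0, -4]

/-- The Gram matrix of `(2) ⊕ A₁(2) ⊕ D₄(2)`. -/
def G14b : Matrix (Fin 6) (Fin 6) ℤ :=
  !![2, 0, 0, 0, 0, 0;
     0, -4, 0, 0, 0, 0;
     0, 0, -4, 2, 0, 0;
     0, 0, 2, -4, 2, 2;
     0, 0, 0, 2, -4, 0;
     0, 0, 0, 2, 0, -4]

def C14 : Matrix (Fin 6) (Fin 6) ℤ :=
  !![3, 1, 1, 2, 2, 2;
     -1, 0, 0, -1, -1, -1;
     -2, -1, -1, -1, -1, -2;
     -3, -1, -2, -2, -2, -2;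
     -2, -1, -1, -1, -2, -1;
     -2, -1, -1, -2, -1, -1]

/-- The explicit matrix `B14` is unimodular and satisfies
`B14ᵀ · ((2) ⊕ A₁² ⊕ A₁(2)³) · B14 = (2) ⊕ A₁(2) ⊕ D₄(2)`; hence these two
hyperbolic lattices are isomorphic. -/
theorem stmt14 : IsUnit B14.det ∧ B14ᵀ * G14a * B14 = G14b := by
  have h1 : B14 * C14 = 1 := by decide
  refine ⟨IsUnit.of_mul_eq_one (a := B14.det) C14.det ?_, by decide⟩
  rw [← Matrix.det_mul, h1, Matrix.det_one]
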